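/- Let X be a rearrangement invariant Banach sequence space with the Fatou property. Then for every x ∈ X, dist(x, X_a) = dist(x*, X_a), where x* is the non-increasing rearrangement of x. -/

import Mathlib

open Filter Topology MeasureTheory Set

/-- A **Banach ideal space** on a measure space `(α, μ)`: a collection of (real-valued)
measurable functions with a complete lattice-compatible norm satisfying the ideal property. -/
structure BanachIdealSpace (α : Type*) [MeasurableSpace α] (μ : Measure α) where
  Mem : (α → ℝ) → Prop
  N : (α → ℝ) → ℝ
  mem_zero : Mem 0
  mem_add : ∀ f g, Mem f → Mem g → Mem (f + g)
  mem_smul : ∀ (c : ℝ) f, Mem f → Mem (c • f)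
  measurable : ∀ f, Mem f → AEMeasurable f μ
  N_nonneg : ∀ f, 0 ≤ N f
  N_zero : N 0 = 0
  N_eq_zero : ∀ f, Mem f → N f = 0 → (∀ᵐ x ∂μ, f x = 0)
  N_add : ∀ f g, Mem f → Mem g → N (f + g) ≤ N f + N g
  N_smul : ∀ (c : ℝ) f, N (c • f) = |c| * N f
  ideal : ∀ f g, AEMeasurable f μ → (∀ᵐ x ∂μ, |f x| ≤ |g x|) → Mem g →
    Mem f ∧ N f ≤ N g
  complete : ∀ u : ℕ → (α → ℝ), (∀ n, Mem (u n)) →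
    (∀ ε : ℝ, 0 < ε → ∃ n₀ : ℕ, ∀ m n, n₀ ≤ m → n₀ ≤ n → N (u m - u n) < ε) →
    ∃ f, Mem f ∧ Tendsto (fun n => N (u n - f)) atTop (𝓝 0)

namespace BanachIdealSpace

variable {α : Type*} [MeasurableSpace α] {μ : Measure α}

/-- Distance (w.r.t. a norm functional `N`) from `f` to a set `S` of functions. -/
noncomputable def distIn (N : (α → ℝ) → ℝ) (f : α → ℝ) (S : Set (α → ℝ)) : ℝ :=
  sInf ((fun g => N (f - g)) '' S)

/-- The set of **order continuous elements** of a (generalized) function space given by a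
membership predicate `Mem` and a norm `N`: those `f` such that every sequence `uₙ` with
`0 ≤ uₙ ≤ |f|` a.e., a.e. non-increasing and converging to `0` a.e., satisfies `N (uₙ) → 0`. -/
def ocSet (μ : Measure α) (Mem : (α → ℝ) → Prop) (N : (α → ℝ) → ℝ) : Set (α → ℝ) :=
  {f | Mem f ∧ ∀ u : ℕ → (α → ℝ), (∀ n, Mem (u n)) →
    (∀ n, ∀ᵐ x ∂μ, 0 ≤ u n x ∧ u n x ≤ |f x|) →
    (∀ n, ∀ᵐ x ∂μ, u (n + 1) x ≤ u n x) →
    (∀ᵐ x ∂μ, Tendsto (fun n => u n x) atTop (𝓝 0)) →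
    Tendsto (fun n => N (u n)) atTop (𝓝 0)}

/-- The ideal `X_a` of order continuous elements of a Banach ideal space `X`. -/
def oc (X : BanachIdealSpace α μ) : Set (α → ℝ) := ocSet μ X.Mem X.N

/-- An **order ideal** of a Banach ideal space: a closed solid linear subspace. -/
structure IsOrderIdeal (X : BanachIdealSpace α μ) (J : Set (α → ℝ)) : Prop where
  subset : ∀ f ∈ J, X.Mem f
  zero : (0 : α → ℝ) ∈ J
  add : ∀ f g, f ∈ J → g ∈ J → f + g ∈ J
  smul : ∀ (c : ℝ) f, f ∈ J → c • f ∈ J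
  solid : ∀ f g, f ∈ J → X.Mem g → (∀ᵐ x ∂μ, |g x| ≤ |f x|) → g ∈ J
  closed : ∀ (u : ℕ → (α → ℝ)) f, (∀ n, u n ∈ J) → X.Mem f →
    Tendsto (fun n => X.N (f - u n)) atTop (𝓝 0) → f ∈ J

/-- The **Fatou property** of a Banach ideal space. -/
def Fatou (X : BanachIdealSpace α μ) : Prop :=
  ∀ (u : ℕ → (α → ℝ)) (f : α → ℝ), (∀ n, X.Mem (u n)) → AEMeasurable f μ →
    (∀ᵐ x ∂μ, 0 ≤ u 0 x) → (∀ᵐ x ∂μ, Monotone fun n => u n x) →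
    (∀ᵐ x ∂μ, Tendsto (fun n => u n x) atTop (𝓝 (f x))) →
    BddAbove (Set.range fun n => X.N (u n)) →
    X.Mem f ∧ Tendsto (fun n => X.N (u n)) atTop (𝓝 (X.N f))

/-- The **semi-Fatou property**: if `0 ≤ uₙ ↑ f ∈ X` then `‖uₙ‖ ↑ ‖f‖`. -/
def SemiFatou (X : BanachIdealSpace α μ) : Prop :=
  ∀ (u : ℕ → (α → ℝ)) (f : α → ℝ), (∀ n, X.Mem (u n)) → X.Mem f →
    (∀ᵐ x ∂μ, 0 ≤ u 0 x) → (∀ᵐ x ∂μ, Monotone fun n => u n x) →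
    (∀ᵐ x ∂μ, Tendsto (fun n => u n x) atTop (𝓝 (f x))) →
    Tendsto (fun n => X.N (u n)) atTop (𝓝 (X.N f))

/-- A Banach ideal space is **rearrangement invariant (symmetric)**: equimeasurable
functions belong to the space simultaneously and have equal norms. -/
def Symmetric (X : BanachIdealSpace α μ) : Prop :=
  ∀ f g, AEMeasurable f μ →
    (∀ lam : ℝ, 0 < lam → μ {x | lam < |f x|} = μ {x | lam < |g x|}) →
    X.Mem g → X.Mem f ∧ X.N f = X.N g

/-- The **non-increasing rearrangement** of a function `f` (w.r.t. the measure `μ`). -/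
noncomputable def rear (μ : Measure α) (f : α → ℝ) (t : ℝ) : ℝ :=
  sInf {lam : ℝ | 0 < lam ∧ μ {x | lam < |f x|} ≤ ENNReal.ofReal t}

/-- A (generalized) function space given by `(Mem, N)` contains a **lattice isometric copy
of `ℓ∞`**: there is a linear map from bounded sequences which preserves absolute values
(hence the lattice operations) and is an isometry for the sup norm on bounded sequences. -/
def HasLatticeCopyLinf (Mem : (α → ℝ) → Prop) (N : (α → ℝ) → ℝ) : Prop :=
  ∃ T : (ℕ → ℝ) → (α → ℝ),
    (∀ x y, T (x + y) = T x + T y) ∧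
    (∀ (c : ℝ) x, T (c • x) = c • T x) ∧
    (∀ x, T (fun n => |x n|) = fun t => |T x t|) ∧
    (∀ x : ℕ → ℝ, BddAbove (Set.range fun n => |x n|) →
      Mem (T x) ∧ N (T x) = ⨆ n, |x n|)

end BanachIdealSpace

open BanachIdealSpace

/-- The non-increasing rearrangement of a sequence:
`x*ₙ = inf {λ > 0 : #{k : |x_k| > λ} < n}` (here indexed from `0`, so the set-condition is
`< n + 1`). -/
noncomputable def rearSeq (x : ℕ → ℝ) (n : ℕ) : ℝ :=
  sInf {lam : ℝ | 0 < lam ∧ Measure.count {k | lam < |x k|} < (n : ℕ∞) + 1}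

/-! The distance from `z` to `X_a` is the infimum of the norms of the tails `z·1_{ℕ∖S}`, `S`
finite: finitely supported elements are order continuous, and the tails of an order continuous
element tend to zero in norm. In a symmetric space `‖z·1_{ℕ∖S}‖ = ‖(z·1_{ℕ∖S})*‖`, and deleting
`#S` entries shifts `z*` by at least `#S`, while deleting the `n` largest entries shifts it by at
most `n`; hence `dist(z, X_a) = infₙ ‖(z*ₙ₊ₖ)ₖ‖`. Since `z** = z*`, the right-hand side is the
same for `x` and `x*`. -/

open scoped ENNReal

section Rearrangement

variable {x y : ℕ → ℝ} {t : ℝ} {n : ℕ}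

noncomputable def countAbove (x : ℕ → ℝ) (t : ℝ) : ℝ≥0∞ := Measure.count {k | t < |x k|}

lemma countAbove_antitone (x : ℕ → ℝ) : Antitone (countAbove x) :=
  fun _ _ h => measure_mono fun _ hk => h.trans_lt hk

lemma countAbove_eq_zero (h : ∀ k, |x k| ≤ t) : countAbove x t = 0 := by
  simp [countAbove, fun k => (h k).not_gt]

lemma countAbove_single (k : ℕ) (c : ℝ) (ht : 0 ≤ t) :
    countAbove (Pi.single k c) t = if t < |c| then 1 else 0 := by
  split_ifs with h
  · have hset : {i | t < |(Pi.single k c : ℕ → ℝ) i|} = {k} := by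
      ext i
      rcases eq_or_ne i k with rfl | hi <;> simp [*, ht.not_gt]
    rw [countAbove, hset, Measure.count_singleton]
  · refine countAbove_eq_zero fun i => ?_
    rcases eq_or_ne i k with rfl | hi <;> simp [*, le_of_not_gt h]

lemma abs_indicator_le {α : Type*} (s : Set α) (f : α → ℝ) (a : α) :
    |s.indicator f a| ≤ |f a| := by
  simpa only [Real.norm_eq_abs] using norm_indicator_le_norm_self f a

lemma bddAbove_abs_of_abs_le {ι : Type*} {f g : ι → ℝ} (h : ∀ i, |g i| ≤ |f i|)
    (hf : BddAbove (range fun i => |f i|)) : BddAbove (range fun i => |g i|) := by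
  obtain ⟨C, hC⟩ := hf
  exact ⟨C, forall_mem_range.2 fun i => (h i).trans (hC (mem_range_self i))⟩

lemma count_lt_natCast_add_one_iff {α : Type*} [MeasurableSpace α] [MeasurableSingletonClass α]
    (s : Set α) (n : ℕ) :
    Measure.count s < (n : ℝ≥0∞) + 1 ↔ Measure.count s ≤ n := by
  rcases s.finite_or_infinite with hs | hs
  · rw [Measure.count_apply_finite s hs]
    exact_mod_cast Nat.lt_succ_iff
  · simp [Measure.count_apply_infinite hs]

lemma rearSeq_eq_sInf (x : ℕ → ℝ) (n : ℕ) :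
    rearSeq x n = sInf {t | 0 < t ∧ countAbove x t ≤ n} := by
  simp only [rearSeq, countAbove, ENat.toENNReal_coe, count_lt_natCast_add_one_iff]

lemma rearSeq_nonneg (x : ℕ → ℝ) (n : ℕ) : 0 ≤ rearSeq x n := by
  rw [rearSeq_eq_sInf]
  exact Real.sInf_nonneg fun _ ht => ht.1.le

lemma lt_countAbove_of_lt_rearSeq (ht : 0 < t) (h : t < rearSeq x n) :
    (n : ℝ≥0∞) < countAbove x t := by
  rw [rearSeq_eq_sInf] at h
  by_contra! hle
  exact h.not_ge (csInf_le ⟨0, fun _ hs => hs.1.le⟩ ⟨ht, hle⟩)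

/-- Right continuity of `countAbove x`, by continuity of the counting measure from below. -/
lemma exists_lt_lt_countAbove (h : (n : ℝ≥0∞) < countAbove x t) :
    ∃ s, t < s ∧ (n : ℝ≥0∞) < countAbove x s := by
  have hunion : {k | t < |x k|} = ⋃ m : ℕ, {k | t + 1 / ((m : ℝ) + 1) < |x k|} := by
    ext k
    simp only [mem_ofPred_eq, mem_iUnion]
    refine ⟨fun hk => ?_, fun ⟨m, hm⟩ => lt_of_le_of_lt (by simp; positivity) hm⟩
    obtain ⟨m, hm⟩ := exists_nat_one_div_lt (sub_pos.2 hk)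
    exact ⟨m, by linarith⟩
  have hmono : Monotone fun m : ℕ => {k | t + 1 / ((m : ℝ) + 1) < |x k|} :=
    fun a b hab k hk => (show t + 1 / ((b : ℝ) + 1) ≤ t + 1 / ((a : ℝ) + 1) by gcongr).trans_lt hk
  have hlim := tendsto_measure_iUnion_atTop (μ := Measure.count) hmono
  rw [← hunion] at hlim
  obtain ⟨m, hm⟩ := (hlim.eventually (lt_mem_nhds h)).exists
  exact ⟨t + 1 / ((m : ℝ) + 1), by simp; positivity, hm⟩

lemma lt_rearSeq_iff (hx : BddAbove (range fun k => |x k|)) (ht : 0 < t) :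
    t < rearSeq x n ↔ (n : ℝ≥0∞) < countAbove x t := by
  refine ⟨lt_countAbove_of_lt_rearSeq ht, fun h => ?_⟩
  obtain ⟨s, hts, hs⟩ := exists_lt_lt_countAbove h
  obtain ⟨C, hC⟩ := hx
  have hC0 : 0 ≤ C := (abs_nonneg _).trans (hC (mem_range_self 0))
  have hne : {r | 0 < r ∧ countAbove x r ≤ n}.Nonempty :=
    ⟨C + 1, by positivity, by
      rw [countAbove_eq_zero fun k => (hC (mem_range_self k)).trans (by linarith)]
      exact bot_le⟩
  rw [rearSeq_eq_sInf]
  refine hts.trans_le (le_csInf hne fun r ⟨_, hr⟩ => ?_)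
  by_contra! hrs
  exact (hs.trans_le ((countAbove_antitone x hrs.le).trans hr)).false

lemma rearSeq_le_rearSeq_of (hy : BddAbove (range fun k => |y k|)) {m : ℕ}
    (h : ∀ t, 0 < t → (n : ℝ≥0∞) < countAbove x t → (m : ℝ≥0∞) < countAbove y t) :
    rearSeq x n ≤ rearSeq y m := by
  by_contra! hlt
  obtain ⟨t, hyt, htx⟩ := exists_between hlt
  have ht : 0 < t := (rearSeq_nonneg y m).trans_lt hyt
  exact hyt.not_gt ((lt_rearSeq_iff hy ht).2 (h t ht (lt_countAbove_of_lt_rearSeq ht htx)))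

lemma rearSeq_antitone (hx : BddAbove (range fun k => |x k|)) : Antitone (rearSeq x) :=
  fun _ _ hab => rearSeq_le_rearSeq_of hx fun _ _ h => lt_of_le_of_lt (by exact_mod_cast hab) h

lemma count_setOf_natCast_lt_count {α : Type*} [MeasurableSpace α] [MeasurableSingletonClass α]
    (s : Set α) :
    Measure.count {k : ℕ | (k : ℝ≥0∞) < Measure.count s} = Measure.count s := by
  rcases s.finite_or_infinite with hs | hs
  · rw [Measure.count_apply_finite s hs]
    have hrange : {k : ℕ | (k : ℝ≥0∞) < hs.toFinset.card} = ↑(Finset.range hs.toFinset.card) := by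
      ext; simp
    rw [hrange, Measure.count_apply_finset, Finset.card_range]
  · simp [Measure.count_apply_infinite hs, Measure.count_apply_infinite infinite_univ]

lemma countAbove_rearSeq (hx : BddAbove (range fun k => |x k|)) (ht : 0 < t) :
    countAbove (rearSeq x) t = countAbove x t := by
  have hset : {k | t < |rearSeq x k|} = {k : ℕ | (k : ℝ≥0∞) < countAbove x t} := by
    ext k
    rw [mem_ofPred_eq, abs_of_nonneg (rearSeq_nonneg x k)]
    exact lt_rearSeq_iff hx ht
  rw [countAbove, hset]
  exact count_setOf_natCast_lt_count _

lemma rearSeq_rearSeq (hx : BddAbove (range fun k => |x k|)) : rearSeq (rearSeq x) = rearSeq x := by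
  ext n
  simp only [rearSeq_eq_sInf]
  congr 1
  ext t
  exact and_congr_right fun ht => by rw [countAbove_rearSeq hx ht]

lemma countAbove_le_countAbove_indicator_compl_add (S : Finset ℕ) (t : ℝ) :
    countAbove x t ≤ countAbove ((↑S : Set ℕ)ᶜ.indicator x) t + S.card := by
  rw [← Measure.count_apply_finset]
  refine (measure_mono fun k (hk : t < |x k|) => ?_).trans (measure_union_le _ _)
  by_cases hkS : k ∈ S
  · exact Or.inr hkS
  · left
    show t < |(↑S : Set ℕ)ᶜ.indicator x k|
    rwa [indicator_of_mem (by simpa using hkS)]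

lemma rearSeq_add_le_rearSeq_indicator_compl (hx : BddAbove (range fun k => |x k|))
    (S : Finset ℕ) (k : ℕ) : rearSeq x (S.card + k) ≤ rearSeq ((↑S : Set ℕ)ᶜ.indicator x) k := by
  refine rearSeq_le_rearSeq_of (bddAbove_abs_of_abs_le (abs_indicator_le _ x) hx) fun t _ h => ?_
  have h' := h.trans_le (countAbove_le_countAbove_indicator_compl_add S t)
  rw [Nat.cast_add, add_comm] at h'
  exact (ENNReal.add_lt_add_iff_right (by simp)).1 h'

lemma exists_lt_abs_of_finite_of_nonempty (x : ℕ → ℝ) :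
    ∃ j, ∀ t, {k | t < |x k|}.Finite → {k | t < |x k|}.Nonempty → t < |x j| := by
  by_cases hmax : ∃ j, ∀ i, |x i| ≤ |x j|
  · obtain ⟨j, hj⟩ := hmax
    exact ⟨j, fun t _ ⟨i, hi⟩ => lt_of_lt_of_le hi (hj i)⟩
  · refine ⟨0, fun t hfin hne => absurd ?_ hmax⟩
    obtain ⟨j, hj, hjmax⟩ := exists_max_image _ (fun k => |x k|) hfin hne
    exact ⟨j, fun i => (le_or_gt |x i| t).elim (fun hi => hi.trans (le_of_lt hj)) (hjmax i)⟩

/-- Deleting a largest entry of `|x|`, or any entry if there is none, shifts `x*` by one. -/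
lemma exists_rearSeq_indicator_compl_singleton_le (hx : BddAbove (range fun k => |x k|)) :
    ∃ j, ∀ k, rearSeq (({j}ᶜ : Set ℕ).indicator x) k ≤ rearSeq x (k + 1) := by
  obtain ⟨j, hj⟩ := exists_lt_abs_of_finite_of_nonempty x
  refine ⟨j, fun k => rearSeq_le_rearSeq_of hx fun t ht h => ?_⟩
  have hdiff : {i | t < |({j}ᶜ : Set ℕ).indicator x i|} = {i | t < |x i|} \ {j} := by
    ext i
    by_cases hi : i = j
    · simp [hi, ht.not_gt]
    · simp [hi]
  rw [countAbove, hdiff] at h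
  rcases ({i | t < |x i|} : Set ℕ).finite_or_infinite with hfin | hinf
  · have hjmem : j ∈ {i | t < |x i|} :=
      hj t hfin ((Measure.count_ne_zero_iff.1 (ne_bot_of_gt h)).mono sdiff_subset)
    rw [countAbove, ← sdiff_union_of_subset (singleton_subset_iff.2 hjmem),
      measure_union disjoint_sdiff_left (measurableSet_singleton j), Measure.count_singleton,
      Nat.cast_add, Nat.cast_one]
    exact ENNReal.add_lt_add_right ENNReal.one_ne_top h
  · rw [countAbove, Measure.count_apply_infinite hinf]
    exact ENNReal.natCast_lt_top _

lemma exists_rearSeq_indicator_compl_le (hx : BddAbove (range fun k => |x k|)) (n : ℕ) :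
    ∃ S : Finset ℕ, ∀ k, rearSeq ((↑S : Set ℕ)ᶜ.indicator x) k ≤ rearSeq x (n + k) := by
  induction n with
  | zero => exact ⟨∅, fun k => by simp⟩
  | succ n ih =>
    obtain ⟨S, hS⟩ := ih
    obtain ⟨j, hj⟩ := exists_rearSeq_indicator_compl_singleton_le
      (bddAbove_abs_of_abs_le (abs_indicator_le (↑S : Set ℕ)ᶜ x) hx)
    refine ⟨insert j S, fun k => ?_⟩
    rw [Finset.coe_insert, insert_eq, compl_union, ← indicator_indicator, add_right_comm]
    exact (hj k).trans (hS (k + 1))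

end Rearrangement

namespace BanachIdealSpace

section General

variable {α : Type*} [MeasurableSpace α] {μ : Measure α} (X : BanachIdealSpace α μ)

lemma mem_sub {f g : α → ℝ} (hf : X.Mem f) (hg : X.Mem g) : X.Mem (f - g) := by
  simpa [sub_eq_add_neg] using X.mem_add f _ hf (X.mem_smul (-1) g hg)

lemma mem_sum_and_N_sum_le {ι : Type*} (S : Finset ι) (g : ι → α → ℝ)
    (hg : ∀ i ∈ S, X.Mem (g i)) :
    X.Mem (∑ i ∈ S, g i) ∧ X.N (∑ i ∈ S, g i) ≤ ∑ i ∈ S, X.N (g i) := by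
  classical
  induction S using Finset.induction_on with
  | empty => simpa using ⟨X.mem_zero, X.N_zero.le⟩
  | insert a S ha ih =>
    obtain ⟨hmem, hle⟩ := ih fun i hi => hg i (Finset.mem_insert_of_mem hi)
    have ha_mem := hg a (Finset.mem_insert_self a S)
    rw [Finset.sum_insert ha, Finset.sum_insert ha]
    exact ⟨X.mem_add _ _ ha_mem hmem, (X.N_add _ _ ha_mem hmem).trans (by linarith)⟩

lemma N_single [DecidableEq α] (a : α) (c : ℝ) :
    X.N (Pi.single a c) = |c| * X.N (Pi.single a 1) := by
  rw [← X.N_smul, ← Pi.single_smul', smul_eq_mul, mul_one]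

end General

variable {X : BanachIdealSpace ℕ Measure.count} {x y z : ℕ → ℝ}

lemma mem_and_N_le_of_abs_le (h : ∀ k, |y k| ≤ |x k|) (hx : X.Mem x) : X.Mem y ∧ X.N y ≤ X.N x :=
  X.ideal y x measurable_from_top.aemeasurable (ae_of_all _ h) hx

lemma mem_single_and_N_le {c : ℝ} {k : ℕ} (hc : |c| ≤ |x k|) (hx : X.Mem x) :
    X.Mem (Pi.single k c) ∧ X.N (Pi.single k c) ≤ X.N x :=
  mem_and_N_le_of_abs_le (fun i => by rcases eq_or_ne i k with rfl | hi <;> simp [*]) hx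

lemma N_le_sum_of_support_subset (hx : X.Mem x) (S : Finset ℕ) (hS : ∀ i ∉ S, x i = 0) :
    X.N x ≤ ∑ k ∈ S, |x k| * X.N (Pi.single k 1) := by
  have hx_eq : x = ∑ k ∈ S, Pi.single k (x k) := by
    ext i
    rw [Finset.sum_apply, Finset.sum_pi_single]
    split_ifs with hi
    exacts [rfl, hS i hi]
  have hle := (X.mem_sum_and_N_sum_le S (fun k => Pi.single k (x k))
    fun k _ => (mem_single_and_N_le le_rfl hx).1).2
  rw [← hx_eq] at hle
  exact hle.trans_eq (Finset.sum_congr rfl fun k _ => X.N_single k (x k))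

lemma mem_oc_of_support_subset (hx : X.Mem x) (S : Finset ℕ) (hS : ∀ i ∉ S, x i = 0) :
    x ∈ X.oc := by
  refine ⟨hx, fun u hu hbound _ hlim => ?_⟩
  simp only [Measure.ae_count_iff] at hbound hlim
  have hsupp : ∀ n, ∀ i ∉ S, u n i = 0 := fun n i hi =>
    le_antisymm (by simpa [hS i hi] using (hbound n i).2) (hbound n i).1
  refine squeeze_zero (fun n => X.N_nonneg _)
    (fun n => N_le_sum_of_support_subset (hu n) S (hsupp n)) ?_
  simpa using tendsto_finsetSum S fun k _ => (hlim k).abs.mul_const (X.N (Pi.single k 1))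

lemma tendsto_N_indicator_Ici (hy : y ∈ X.oc) :
    Tendsto (fun m => X.N ((Ici m).indicator y)) atTop (𝓝 0) := by
  set u : ℕ → ℕ → ℝ := fun m k => |(Ici m).indicator y k|
  have hu_le : ∀ m k, |u m k| ≤ |y k| := fun m k => (abs_abs _).trans_le (abs_indicator_le _ y k)
  have hu_mem : ∀ m, X.Mem (u m) := fun m => (mem_and_N_le_of_abs_le (hu_le m) hy.1).1
  have hN_le : ∀ m, X.N ((Ici m).indicator y) ≤ X.N (u m) := fun m =>
    (mem_and_N_le_of_abs_le (fun k => (abs_abs _).ge) (hu_mem m)).2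
  refine squeeze_zero (fun _ => X.N_nonneg _) hN_le (hy.2 u hu_mem ?_ ?_ ?_)
  · exact fun m => ae_of_all _ fun k => ⟨abs_nonneg _, (le_abs_self _).trans (hu_le m k)⟩
  · refine fun m => ae_of_all _ fun k => ?_
    by_cases hk : m + 1 ≤ k
    · simp [u, hk, (Nat.le_succ m).trans hk]
    · simp [u, hk]
  · refine ae_of_all _ fun k => tendsto_const_nhds.congr' ?_
    filter_upwards [eventually_gt_atTop k] with m hm
    simp [u, hm.not_ge]

lemma distIn_oc_eq_iInf_N_indicator_compl (hz : X.Mem z) :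
    distIn X.N z X.oc = ⨅ S : Finset ℕ, X.N ((↑S : Set ℕ)ᶜ.indicator z) := by
  have hbdd : BddBelow ((fun g => X.N (z - g)) '' X.oc) :=
    ⟨0, forall_mem_image.2 fun _ _ => X.N_nonneg _⟩
  have hbdd' : BddBelow (range fun S : Finset ℕ => X.N ((↑S : Set ℕ)ᶜ.indicator z)) :=
    ⟨0, forall_mem_range.2 fun _ => X.N_nonneg _⟩
  refine le_antisymm (le_ciInf fun S => csInf_le hbdd ⟨(↑S : Set ℕ).indicator z, ?_, ?_⟩) ?_
  · exact mem_oc_of_support_subset (mem_and_N_le_of_abs_le (abs_indicator_le _ z) hz).1 S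
      fun i hi => indicator_of_notMem hi z
  · simp only [indicator_compl]
  have h0 : (0 : ℕ → ℝ) ∈ X.oc := mem_oc_of_support_subset X.mem_zero ∅ fun _ _ => rfl
  refine le_csInf ⟨_, mem_image_of_mem _ h0⟩ (forall_mem_image.2 fun y hy => ?_)
  have hzy := X.mem_sub hz hy.1
  have hle : ∀ m, ⨅ S : Finset ℕ, X.N ((↑S : Set ℕ)ᶜ.indicator z)
      ≤ X.N (z - y) + X.N ((Ici m).indicator y) := fun m => by
    have hmem₁ := mem_and_N_le_of_abs_le (abs_indicator_le (Ici m) _) hzy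
    have hmem₂ := mem_and_N_le_of_abs_le (abs_indicator_le (Ici m) _) hy.1
    calc ⨅ S : Finset ℕ, X.N ((↑S : Set ℕ)ᶜ.indicator z)
        ≤ X.N ((Ici m).indicator z) := by
          simpa using ciInf_le hbdd' (Finset.range m)
      _ = X.N ((Ici m).indicator (z - y) + (Ici m).indicator y) := by
          rw [← indicator_add', sub_add_cancel]
      _ ≤ X.N (z - y) + X.N ((Ici m).indicator y) :=
          (X.N_add _ _ hmem₁.1 hmem₂.1).trans (by linarith [hmem₁.2])
  simpa using ge_of_tendsto ((tendsto_N_indicator_Ici hy).const_add (X.N (z - y)))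
    (Eventually.of_forall hle)

namespace Symmetric

lemma mem_and_N_eq (hX : X.Symmetric) (h : ∀ t, 0 < t → countAbove y t = countAbove x t)
    (hx : X.Mem x) : X.Mem y ∧ X.N y = X.N x :=
  hX y x measurable_from_top.aemeasurable h hx

lemma mem_rearSeq_and_N_eq (hX : X.Symmetric) (hx : X.Mem x)
    (hb : BddAbove (range fun k => |x k|)) : X.Mem (rearSeq x) ∧ X.N (rearSeq x) = X.N x :=
  hX.mem_and_N_eq (fun _ ht => countAbove_rearSeq hb ht) hx

/-- All unit vectors have the same positive norm, so `|x k| ≤ ‖x‖ / ‖e_j‖` for any `j` with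
`x j ≠ 0`. -/
lemma bddAbove_abs (hX : X.Symmetric) (hx : X.Mem x) : BddAbove (range fun k => |x k|) := by
  rcases em (∃ j, x j ≠ 0) with ⟨j, hj⟩ | h0
  swap
  · exact ⟨0, forall_mem_range.2 fun k => by simp_all⟩
  have hej : X.Mem (Pi.single j 1) := by
    have hmem := X.mem_smul (x j)⁻¹ _ (mem_single_and_N_le (le_refl |x j|) hx).1
    rwa [← Pi.single_smul', smul_eq_mul, inv_mul_cancel₀ hj] at hmem
  have hpos : 0 < X.N (Pi.single j 1) := (X.N_nonneg _).lt_of_ne fun h => by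
    simpa using Measure.ae_count_iff.1 (X.N_eq_zero _ hej h.symm) j
  refine ⟨X.N x / X.N (Pi.single j 1), forall_mem_range.2 fun k => (le_div_iff₀ hpos).2 ?_⟩
  obtain ⟨hk, hNk⟩ := mem_single_and_N_le (le_refl |x k|) hx
  have hjk : X.N (Pi.single j (x k)) = X.N (Pi.single k (x k)) :=
    (hX.mem_and_N_eq (fun t ht => by
      rw [countAbove_single _ _ ht.le, countAbove_single _ _ ht.le]) hk).2
  calc |x k| * X.N (Pi.single j 1) = X.N (Pi.single k (x k)) := by rw [← N_single, hjk]
    _ ≤ X.N x := hNk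

lemma distIn_oc_eq_iInf_N_shift_rearSeq (hX : X.Symmetric) (hz : X.Mem z) :
    distIn X.N z X.oc = ⨅ n, X.N (fun k => rearSeq z (n + k)) := by
  have hb := hX.bddAbove_abs hz
  have htail (S : Finset ℕ) := hX.mem_rearSeq_and_N_eq
    (mem_and_N_le_of_abs_le (abs_indicator_le (↑S : Set ℕ)ᶜ z) hz).1
    (bddAbove_abs_of_abs_le (abs_indicator_le _ z) hb)
  have hshift : ∀ n, X.Mem (fun k => rearSeq z (n + k)) := fun n =>
    (mem_and_N_le_of_abs_le (fun k => abs_le_abs_of_nonneg (rearSeq_nonneg _ _)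
      (rearSeq_antitone hb (Nat.le_add_left k n))) (hX.mem_rearSeq_and_N_eq hz hb).1).1
  have hbdd : BddBelow (range fun S : Finset ℕ => X.N ((↑S : Set ℕ)ᶜ.indicator z)) :=
    ⟨0, forall_mem_range.2 fun _ => X.N_nonneg _⟩
  have hbdd' : BddBelow (range fun n => X.N (fun k => rearSeq z (n + k))) :=
    ⟨0, forall_mem_range.2 fun _ => X.N_nonneg _⟩
  rw [distIn_oc_eq_iInf_N_indicator_compl hz]
  refine le_antisymm (le_ciInf fun n => ?_) (le_ciInf fun S => ?_)
  · obtain ⟨S, hS⟩ := exists_rearSeq_indicator_compl_le hb n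
    calc ⨅ S : Finset ℕ, X.N ((↑S : Set ℕ)ᶜ.indicator z)
        ≤ X.N ((↑S : Set ℕ)ᶜ.indicator z) := ciInf_le hbdd S
      _ = X.N (rearSeq ((↑S : Set ℕ)ᶜ.indicator z)) := (htail S).2.symm
      _ ≤ X.N (fun k => rearSeq z (n + k)) := (mem_and_N_le_of_abs_le
          (fun k => abs_le_abs_of_nonneg (rearSeq_nonneg _ _) (hS k)) (hshift n)).2
  · calc ⨅ n, X.N (fun k => rearSeq z (n + k))
        ≤ X.N (fun k => rearSeq z (S.card + k)) := ciInf_le hbdd' S.card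
      _ ≤ X.N (rearSeq ((↑S : Set ℕ)ᶜ.indicator z)) := (mem_and_N_le_of_abs_le
          (fun k => abs_le_abs_of_nonneg (rearSeq_nonneg _ _)
            (rearSeq_add_le_rearSeq_indicator_compl hb S k)) (htail S).1).2
      _ = X.N ((↑S : Set ℕ)ᶜ.indicator z) := (htail S).2

end Symmetric

end BanachIdealSpace

open BanachIdealSpace

theorem dist_to_oc_eq_dist_rearrangement_seq_general
    (X : BanachIdealSpace ℕ Measure.count) (hsymm : X.Symmetric)
    (x : ℕ → ℝ) (hx : X.Mem x) :
    distIn X.N x X.oc = distIn X.N (rearSeq x) X.oc := by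
  have hb := hsymm.bddAbove_abs hx
  rw [hsymm.distIn_oc_eq_iInf_N_shift_rearSeq hx,
    hsymm.distIn_oc_eq_iInf_N_shift_rearSeq (hsymm.mem_rearSeq_and_N_eq hx hb).1,
    rearSeq_rearSeq hb]

/-- Let `X` be a rearrangement invariant Banach sequence space with the Fatou property.
Then for every `x ∈ X`, `dist (x, X_a) = dist (x*, X_a)`. -/
theorem dist_to_oc_eq_dist_rearrangement_seq
    (X : BanachIdealSpace ℕ Measure.count) (hsymm : X.Symmetric) (hFatou : X.Fatou)
    (x : ℕ → ℝ) (hx : X.Mem x) :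
    distIn X.N x X.oc = distIn X.N (rearSeq x) X.oc :=
  dist_to_oc_eq_dist_rearrangement_seq_general X hsymm x hx
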